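/- arXiv:1203.1482 — 5 statements merged into one kernel-verified Lean document; each statement's English description precedes it below -/
import Mathlib

section
/- Let n ≥ 1, let f_0,…,f_n be a non-negative, log-concave sequence without internal zeros which is not identically zero, and put m = ⌊n/2⌋. Suppose M_0, M_1, …, M_m are real numbers with M_m > 0 and Σ_{k=0}^m M_k ≥ 0, and suppose the sequence M_0,…,M_m has at most one change of sign in the following sense: there exists an index t with 0 ≤ t ≤ m such that M_k ≤ 0 for all k < t and M_k ≥ 0 for all k ≥ t. Then Σ_{k=0}^m f_k f_{n−k} M_k ≥ 0. -/
/-!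
Log-concavity without internal zeros makes `k ↦ f k * f (n - k)` nondecreasing on `[0, n/2]`.
Writing `g k = f k * f (n - k)`, the sum equals `∑ (g k - g t) M k + g t ∑ M k`; each term of
the first sum is non-negative because `g k - g t` and `M k` have the same sign on either side of
the sign change `t`.
-/

open Finset

theorem sum_mul_nonneg_of_monotoneOn_of_signChange {ι : Type*} [LinearOrder ι] {s : Finset ι}
    {g M : ι → ℝ} {t : ι} (ht : t ∈ s) (hg : MonotoneOn g s) (hgt : 0 ≤ g t)
    (hMsum : 0 ≤ ∑ k ∈ s, M k) (hM : ∀ k ∈ s, (k < t → M k ≤ 0) ∧ (t ≤ k → 0 ≤ M k)) :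
    0 ≤ ∑ k ∈ s, g k * M k := by
  have hterm : ∀ k ∈ s, 0 ≤ (g k - g t) * M k := by
    intro k hk
    rcases lt_or_ge k t with hkt | htk
    · exact mul_nonneg_of_nonpos_of_nonpos (sub_nonpos.2 (hg hk ht hkt.le)) ((hM k hk).1 hkt)
    · exact mul_nonneg (sub_nonneg.2 (hg ht hk htk)) ((hM k hk).2 htk)
  calc 0 ≤ ∑ k ∈ s, (g k - g t) * M k + g t * ∑ k ∈ s, M k :=
        add_nonneg (sum_nonneg hterm) (mul_nonneg hgt hMsum)
    _ = ∑ k ∈ s, g k * M k := by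
        rw [mul_sum, ← sum_add_distrib]
        exact sum_congr rfl fun k _ => by ring

/-- The ratio `f (j + 1) / f j` of a positive log-concave sequence is nonincreasing. -/
theorem mul_le_mul_of_logConcave {f : ℕ → ℝ} {a b : ℕ} (hab : a ≤ b)
    (hpos : ∀ k, a ≤ k → k ≤ b + 1 → 0 < f k)
    (hlc : ∀ k, a < k → k ≤ b → f (k - 1) * f (k + 1) ≤ f k ^ 2) :
    f a * f (b + 1) ≤ f (a + 1) * f b := by
  induction b, hab using Nat.le_induction with
  | base => rw [mul_comm]
  | succ b hab ih =>
    have hprev := ih (fun k h₁ h₂ => hpos k h₁ (by omega)) (fun k h₁ h₂ => hlc k h₁ (by omega))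
    have hstep : f b * f (b + 2) ≤ f (b + 1) ^ 2 := by
      simpa using hlc (b + 1) (by omega) le_rfl
    have hfa : 0 ≤ f a := (hpos a le_rfl (by omega)).le
    have hfb : 0 < f b := hpos b hab (by omega)
    have hfb1 : 0 ≤ f (b + 1) := (hpos (b + 1) (by omega) (by omega)).le
    refine le_of_mul_le_mul_right ?_ hfb
    calc f a * f (b + 1 + 1) * f b = f a * (f b * f (b + 2)) := by ring
      _ ≤ f a * f (b + 1) ^ 2 := mul_le_mul_of_nonneg_left hstep hfa
      _ = f (b + 1) * (f a * f (b + 1)) := by ring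
      _ ≤ f (b + 1) * (f (a + 1) * f b) := mul_le_mul_of_nonneg_left hprev hfb1
      _ = f (a + 1) * f (b + 1) * f b := by ring

theorem mul_apply_sub_le_succ {n : ℕ} {f : ℕ → ℝ} (hpos : ∀ k, k ≤ n → 0 ≤ f k)
    (hlc : ∀ k, 1 ≤ k → k ≤ n - 1 → f (k - 1) * f (k + 1) ≤ f k ^ 2)
    (hniz : ∀ i j k, i ≤ k → k ≤ j → j ≤ n → 0 < f i → 0 < f j → 0 < f k)
    {k : ℕ} (hk : 2 * (k + 1) ≤ n) :
    f k * f (n - k) ≤ f (k + 1) * f (n - (k + 1)) := by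
  have hnext : 0 ≤ f (k + 1) * f (n - (k + 1)) :=
    mul_nonneg (hpos _ (by omega)) (hpos _ (by omega))
  rcases (hpos k (by omega)).eq_or_lt with hfk | hfk
  · rwa [← hfk, zero_mul]
  rcases (hpos (n - k) (by omega)).eq_or_lt with hfnk | hfnk
  · rwa [← hfnk, mul_zero]
  have key := mul_le_mul_of_logConcave (f := f) (a := k) (b := n - k - 1) (by omega)
    (fun j h₁ h₂ => hniz k (n - k) j h₁ (by omega) (by omega) hfk hfnk)
    (fun j h₁ h₂ => hlc j (by omega) (by omega))
  rwa [show n - k - 1 + 1 = n - k by omega, show n - k - 1 = n - (k + 1) by omega] at key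

theorem key_sum_nonneg_general
    (n : ℕ) (f : ℕ → ℝ)
    (hpos : ∀ k, k ≤ n → 0 ≤ f k)
    (hlc : ∀ k, 1 ≤ k → k ≤ n - 1 → f (k - 1) * f (k + 1) ≤ f k ^ 2)
    (hniz : ∀ i j k, i ≤ k → k ≤ j → j ≤ n → 0 < f i → 0 < f j → 0 < f k)
    (M : ℕ → ℝ)
    (hMsum : 0 ≤ ∑ k ∈ Finset.range (n / 2 + 1), M k)
    (hsign : ∃ t, t ≤ n / 2 ∧ ∀ k, k ≤ n / 2 →
      (k < t → M k ≤ 0) ∧ (t ≤ k → 0 ≤ M k)) :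
    0 ≤ ∑ k ∈ Finset.range (n / 2 + 1), f k * f (n - k) * M k := by
  obtain ⟨t, ht, hM⟩ := hsign
  have hmono : MonotoneOn (fun k => f k * f (n - k)) (Set.Iic (n / 2)) :=
    monotoneOn_of_le_add_one Set.ordConnected_Iic fun k _ _ hk =>
      mul_apply_sub_le_succ hpos hlc hniz (by simp only [Set.mem_Iic] at hk; omega)
  refine sum_mul_nonneg_of_monotoneOn_of_signChange (t := t) (by simpa [Nat.lt_succ_iff] using ht)
    (hmono.mono fun k hk => ?_) (mul_nonneg (hpos t (by omega)) (hpos _ (by omega))) hMsum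
    fun k hk => hM k (by simpa [Nat.lt_succ_iff] using hk)
  simpa [Nat.lt_succ_iff] using hk

theorem key_sum_nonneg
    (n : ℕ) (hn : 1 ≤ n) (f : ℕ → ℝ)
    (hpos : ∀ k, k ≤ n → 0 ≤ f k)
    (hlc : ∀ k, 1 ≤ k → k ≤ n - 1 → f (k - 1) * f (k + 1) ≤ f k ^ 2)
    (hniz : ∀ i j k, i ≤ k → k ≤ j → j ≤ n → 0 < f i → 0 < f j → 0 < f k)
    (hnz : ∃ k, k ≤ n ∧ f k ≠ 0)
    (M : ℕ → ℝ)
    (hMlast : 0 < M (n / 2))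
    (hMsum : 0 ≤ ∑ k ∈ Finset.range (n / 2 + 1), M k)
    (hsign : ∃ t, t ≤ n / 2 ∧ ∀ k, k ≤ n / 2 →
      (k < t → M k ≤ 0) ∧ (t ≤ k → 0 ≤ M k)) :
    0 ≤ ∑ k ∈ Finset.range (n / 2 + 1), f k * f (n - k) * M k :=
  key_sum_nonneg_general n f hpos hlc hniz M hMsum hsign
end

section
/- Let q ≥ 1, let a_2,…,a_q be positive real numbers, and let 0 < s ≤ t be reals. Then for every k = 1,2,…,q, e_k(s, a_2,…,a_q) · e_{k−1}(t, a_2,…,a_q) ≤ e_k(t, a_2,…,a_q) · e_{k−1}(s, a_2,…,a_q); that is, the ratio e_k/e_{k−1} of elementary symmetric polynomials in positive variables is increasing in each variable. -/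
/-!
Splitting off the first variable, `e_k(x, a) = E_k + x E_{k-1}` where `E` are the elementary
symmetric polynomials of the remaining variables, so
`e_k(t, a) e_{k-1}(s, a) - e_k(s, a) e_{k-1}(t, a) = (t - s) (E_{k-1}^2 - E_k E_{k-2})`.
This is nonnegative by the log-concavity `E_{k-2} E_k ≤ E_{k-1}^2` of the elementary symmetric
polynomials of nonnegative numbers. That is proved by induction on the number of variables,
together with the more general `E_i E_{j+2} ≤ E_{i+1} E_{j+1}` for `i ≤ j`, which the inductive
step needs.
-/

/-- The `k`-th elementary symmetric polynomial of the values of `a : Fin q → ℝ`. -/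
noncomputable def esymm {q : ℕ} (a : Fin q → ℝ) (k : ℕ) : ℝ :=
  ∑ s ∈ Finset.powersetCard k (Finset.univ : Finset (Fin q)), ∏ i ∈ s, a i

namespace Multiset

section OrderedSemiring

variable {R : Type*} [CommSemiring R]

theorem esymm_zero_right (s : Multiset R) : s.esymm 0 = 1 := by
  simp [esymm]

theorem esymm_zero_left (n : ℕ) : (0 : Multiset R).esymm (n + 1) = 0 := by
  rw [esymm, powersetCard_zero_right, map_zero, sum_zero]

theorem esymm_cons_succ (x : R) (s : Multiset R) (n : ℕ) :
    (x ::ₘ s).esymm (n + 1) = s.esymm (n + 1) + x * s.esymm n := by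
  simp [esymm, powersetCard_cons, map_map, sum_map_mul_left]

variable [PartialOrder R] [IsOrderedRing R] {s : Multiset R}

theorem esymm_nonneg (hs : ∀ x ∈ s, 0 ≤ x) (n : ℕ) : 0 ≤ s.esymm n :=
  sum_nonneg fun _ hp ↦ by
    obtain ⟨t, ht, rfl⟩ := mem_map.1 hp
    exact prod_nonneg fun x hx ↦ hs x (mem_of_le (mem_powersetCard.1 ht).1 hx)

theorem esymm_mul_esymm_le_of_le (hs : ∀ x ∈ s, 0 ≤ x) {i j : ℕ} (hij : i ≤ j) :
    s.esymm i * s.esymm (j + 2) ≤ s.esymm (i + 1) * s.esymm (j + 1) := by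
  induction s using Multiset.induction_on generalizing i j with
  | empty => simp [esymm_zero_left]
  | cons x s ih =>
    have hx : 0 ≤ x := hs x (mem_cons_self x s)
    replace hs : ∀ y ∈ s, 0 ≤ y := fun y hy ↦ hs y (mem_cons_of_mem hy)
    replace ih := @ih hs
    have he := esymm_nonneg hs
    obtain _ | i := i
    · have h : s.esymm (j + 2) ≤ s.esymm 1 * s.esymm (j + 1) := by
        simpa only [esymm_zero_right, one_mul] using ih (Nat.zero_le j)
      simp only [esymm_zero_right, one_mul, zero_add, esymm_cons_succ]
      calc s.esymm (j + 2) + x * s.esymm (j + 1)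
          ≤ s.esymm 1 * s.esymm (j + 1) + x * s.esymm (j + 1) := by gcongr
        _ ≤ s.esymm 1 * s.esymm (j + 1) + x * s.esymm (j + 1)
              + (x * s.esymm 1 + x ^ 2) * s.esymm j :=
            le_add_of_nonneg_right <|
              mul_nonneg (add_nonneg (mul_nonneg hx (he 1)) (pow_nonneg hx 2)) (he j)
        _ = (s.esymm 1 + x * 1) * (s.esymm (j + 1) + x * s.esymm j) := by ring
    obtain _ | j := j
    · exact absurd hij (Nat.not_succ_le_zero i)
    have hij : i ≤ j := Nat.le_of_succ_le_succ hij
    have h_outer := ih (Nat.succ_le_succ hij)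
    have h_inner := ih hij
    have h_mid : s.esymm i * s.esymm (j + 3) ≤ s.esymm (i + 2) * s.esymm (j + 1) := by
      obtain rfl | hlt := hij.eq_or_lt
      · rw [mul_comm (s.esymm (i + 2))]
        exact ih (Nat.le_succ i)
      · exact (ih (Nat.le_succ_of_le hij)).trans (ih hlt)
    calc esymm (x ::ₘ s) (i + 1) * esymm (x ::ₘ s) (j + 1 + 2)
        = s.esymm (i + 1) * s.esymm (j + 3)
            + x * (s.esymm i * s.esymm (j + 3) + s.esymm (i + 1) * s.esymm (j + 2))
            + x ^ 2 * (s.esymm i * s.esymm (j + 2)) := by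
          simp only [esymm_cons_succ]; ring
      _ ≤ s.esymm (i + 2) * s.esymm (j + 2)
            + x * (s.esymm (i + 2) * s.esymm (j + 1) + s.esymm (i + 1) * s.esymm (j + 2))
            + x ^ 2 * (s.esymm (i + 1) * s.esymm (j + 1)) := by
          gcongr ?_ + x * (?_ + _) + x ^ 2 * ?_
      _ = esymm (x ::ₘ s) (i + 1 + 1) * esymm (x ::ₘ s) (j + 1 + 1) := by
          simp only [esymm_cons_succ]; ring

theorem esymm_mul_esymm_add_two_le_sq (hs : ∀ x ∈ s, 0 ≤ x) (i : ℕ) :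
    s.esymm i * s.esymm (i + 2) ≤ s.esymm (i + 1) ^ 2 := by
  simpa only [sq] using esymm_mul_esymm_le_of_le hs le_rfl

end OrderedSemiring

section OrderedRing

variable {R : Type*} [CommRing R] [LinearOrder R] [IsStrictOrderedRing R] {s : Multiset R}

theorem esymm_cons_mul_esymm_cons_le (hs : ∀ x ∈ s, 0 ≤ x) {x y : R} (hxy : x ≤ y) (k : ℕ) :
    (x ::ₘ s).esymm (k + 1) * (y ::ₘ s).esymm k ≤
      (y ::ₘ s).esymm (k + 1) * (x ::ₘ s).esymm k := by
  obtain _ | k := k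
  · simpa only [esymm_cons_succ, esymm_zero_right, mul_one, add_le_add_iff_left] using hxy
  · have h_newton := esymm_mul_esymm_add_two_le_sq hs k
    simp only [esymm_cons_succ]
    nlinarith [mul_nonneg (sub_nonneg.2 hxy) (sub_nonneg.2 h_newton)]

end OrderedRing

end Multiset

theorem Finset.univ_val_map_update {ι R : Type*} [Fintype ι] [DecidableEq ι] (f : ι → R) (i : ι)
    (x : R) : univ.val.map (Function.update f i x) = x ::ₘ (univ.erase i).val.map f := by
  rw [← Multiset.cons_erase (mem_univ_val i), Multiset.map_cons, Function.update_self, erase_val]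
  congr 1
  refine Multiset.map_congr rfl fun j hj ↦ Function.update_of_ne ?_ x f
  simpa [← erase_val] using hj

theorem esymm_eq_esymm_map_val {q : ℕ} (a : Fin q → ℝ) (k : ℕ) :
    esymm a k = (Finset.univ.val.map a).esymm k :=
  (Finset.esymm_map_val a Finset.univ k).symm

theorem esymm_ratio_monotone_in_each_variable_general
    (q : ℕ) (hq : 1 ≤ q) (a : Fin q → ℝ)
    (ha_pos : ∀ i, i ≠ ⟨0, hq⟩ → 0 < a i)
    (s t : ℝ) (hst : s ≤ t) :
    ∀ k, 1 ≤ k → k ≤ q →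
      esymm (Function.update a ⟨0, hq⟩ s) k * esymm (Function.update a ⟨0, hq⟩ t) (k - 1) ≤
        esymm (Function.update a ⟨0, hq⟩ t) k * esymm (Function.update a ⟨0, hq⟩ s) (k - 1) := by
  intro k hk _
  obtain ⟨j, rfl⟩ := Nat.exists_eq_add_of_le' hk
  have h_rest : ∀ x ∈ (Finset.univ.erase ⟨0, hq⟩).val.map a, 0 ≤ x := by
    simp only [Multiset.mem_map, Finset.mem_val, Finset.mem_erase]
    rintro _ ⟨i, ⟨hi, -⟩, rfl⟩
    exact (ha_pos i hi).le
  simp only [esymm_eq_esymm_map_val, Finset.univ_val_map_update, Nat.add_sub_cancel]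
  exact Multiset.esymm_cons_mul_esymm_cons_le h_rest hst j

theorem esymm_ratio_monotone_in_each_variable
    (q : ℕ) (hq : 1 ≤ q) (a : Fin q → ℝ)
    (ha_pos : ∀ i, i ≠ ⟨0, hq⟩ → 0 < a i)
    (s t : ℝ) (hs : 0 < s) (hst : s ≤ t) :
    ∀ k, 1 ≤ k → k ≤ q →
      esymm (Function.update a ⟨0, hq⟩ s) k * esymm (Function.update a ⟨0, hq⟩ t) (k - 1) ≤
        esymm (Function.update a ⟨0, hq⟩ t) k * esymm (Function.update a ⟨0, hq⟩ s) (k - 1) :=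
  esymm_ratio_monotone_in_each_variable_general q hq a ha_pos s t hst
end

section
/- Let n ≥ 2 and let f_0,…,f_n be non-negative reals satisfying the strict log-concavity condition f_k² > f_{k−1} f_{k+1} for all k = 1,2,…,n−1. Then the polynomial P_n(x) has degree exactly n−2, and all of its coefficients at x^j for j = 0,1,…,n−2 are positive. -/
/-!
Write `p_k = (x)_k` and `c_k = f_k f_{n-k}`. After multiplication by `x` each bracket of `P_n`
telescopes: `x C(n,k) [p_k p_{n-k} - (x+1)_k (x-1)_{n-k}] = σ_{k+1} - σ_k` with
`σ_k = k C(n,k) p_k p_{n-k}`. Summation by parts turns `x P_n` into `Σ_k (c_k - c_{k+1}) σ_{k+1}`,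
and averaging this sum with its reflection `k ↦ n - 1 - k` (under which `c` is symmetric) gives,
with `N = n - 1`,

  `2 x P_n = Σ_{i=0}^{N} (N+1) C(N,i) (N - 2i) (f_{i+1} f_{N-i} - f_i f_{N+1-i}) p_i p_{N-i}`.

Strict log-concavity makes `f_i f_{N+1-i} < f_{i+1} f_{N-i}` for `2i < N` and the reverse for
`2i > N`, so every weight is `≥ 0` and the `i = 0` weight is `> 0`. Since the `p_i` have
non-negative coefficients and `p_N` has positive coefficients at `x^1, …, x^N`, `x P_n` has degree
`N` with positive coefficients at `x^1, …, x^N`.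
-/

open Polynomial

/-- The polynomial `P_n(x) = Σ_{k=0}^n f_k f_{n-k} C(n,k) [(x)_k (x)_{n-k} - (x+1)_k (x-1)_{n-k}]`,
where `(x)_k` is the rising factorial. -/
noncomputable def Ppoly (n : ℕ) (f : ℕ → ℝ) : Polynomial ℝ :=
  ∑ k ∈ Finset.range (n + 1),
    C (f k * f (n - k) * (n.choose k : ℝ)) *
      (ascPochhammer ℝ k * ascPochhammer ℝ (n - k) -
        (ascPochhammer ℝ k).comp (X + 1) * (ascPochhammer ℝ (n - k)).comp (X - 1))

section CommRing

variable {R : Type*} [CommRing R]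

theorem ascPochhammer_succ_comp_X_sub_one (k : ℕ) :
    (ascPochhammer R (k + 1)).comp (X - 1) = (X - 1) * ascPochhammer R k := by
  rw [ascPochhammer_succ_left, mul_comp, comp_assoc, X_comp, add_comp, X_comp, one_comp,
    sub_add_cancel, comp_X]

theorem X_mul_ascPochhammer_comp_X_add_one (k : ℕ) :
    X * (ascPochhammer R k).comp (X + 1) = ascPochhammer R k * (X + (k : R[X])) := by
  rw [← ascPochhammer_succ_left, ascPochhammer_succ_right]

theorem X_mul_ascPochhammer_sub_shift (k l : ℕ) :
    X * (ascPochhammer R k * ascPochhammer R l -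
        (ascPochhammer R k).comp (X + 1) * (ascPochhammer R l).comp (X - 1)) =
      (l : R[X]) * (ascPochhammer R (k + 1) * ascPochhammer R (l - 1)) -
        (k : R[X]) * (ascPochhammer R k * ascPochhammer R l) := by
  have hX := X_mul_ascPochhammer_comp_X_add_one (R := R) k
  rcases l with _ | l
  · simp only [ascPochhammer_zero, one_comp, mul_one, Nat.cast_zero, zero_mul]
    linear_combination -hX
  · rw [ascPochhammer_succ_comp_X_sub_one, Nat.add_sub_cancel, ascPochhammer_succ_right R l,
      ascPochhammer_succ_right R k]
    push_cast
    linear_combination (-(X - 1) * ascPochhammer R l) * hX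

theorem X_mul_choose_mul_ascPochhammer_sub_shift (n k : ℕ) :
    X * ((n.choose k : R[X]) * (ascPochhammer R k * ascPochhammer R (n - k) -
        (ascPochhammer R k).comp (X + 1) * (ascPochhammer R (n - k)).comp (X - 1))) =
      (((k + 1) * n.choose (k + 1) : ℕ) : R[X]) *
          (ascPochhammer R (k + 1) * ascPochhammer R (n - (k + 1))) -
        ((k * n.choose k : ℕ) : R[X]) * (ascPochhammer R k * ascPochhammer R (n - k)) := by
  have hchoose : (k + 1) * n.choose (k + 1) = (n - k) * n.choose k := by
    rw [mul_comm, Nat.choose_succ_right_eq, mul_comm]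
  rw [mul_left_comm, X_mul_ascPochhammer_sub_shift, hchoose, Nat.sub_sub]
  push_cast
  ring

theorem ascPochhammer_succ_mul_sub_mul_succ (i j : ℕ) :
    ascPochhammer R (j + 1) * ascPochhammer R i - ascPochhammer R (i + 1) * ascPochhammer R j =
      ((j : R[X]) - i) * (ascPochhammer R i * ascPochhammer R j) := by
  rw [ascPochhammer_succ_right, ascPochhammer_succ_right]
  ring

theorem Finset.sum_range_mul_sub_by_parts (c σ : ℕ → R) (n : ℕ) :
    ∑ k ∈ Finset.range (n + 1), c k * (σ (k + 1) - σ k) =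
      c n * σ (n + 1) - c 0 * σ 0 + ∑ k ∈ Finset.range n, (c k - c (k + 1)) * σ (k + 1) := by
  induction n with
  | zero => simp [mul_sub]
  | succ n ih =>
    rw [Finset.sum_range_succ, ih, Finset.sum_range_succ]
    ring

end CommRing

theorem ascPochhammer_nat_coeff_pos {k m : ℕ} (hm : 1 ≤ m) (hmk : m ≤ k) :
    0 < (ascPochhammer ℕ k).coeff m := by
  induction k generalizing m with
  | zero => omega
  | succ k ih =>
    obtain ⟨m, rfl⟩ : ∃ m', m = m' + 1 := ⟨m - 1, by omega⟩
    rw [ascPochhammer_succ_right, mul_add, coeff_add, coeff_mul_X, coeff_mul_natCast]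
    rcases Nat.eq_zero_or_pos m with rfl | hm
    · rcases Nat.eq_zero_or_pos k with rfl | hk
      · simp
      · exact Nat.add_pos_right _ (Nat.mul_pos (ih le_rfl hk) hk)
    · exact Nat.add_pos_left (ih hm (by omega)) _

section OrderedSemiring

variable {R : Type*} [CommSemiring R] [PartialOrder R] [IsOrderedRing R]

theorem ascPochhammer_mul_coeff_nonneg (i j m : ℕ) :
    0 ≤ (ascPochhammer R i * ascPochhammer R j).coeff m := by
  rw [← ascPochhammer_map (Nat.castRingHom R), ← ascPochhammer_map (Nat.castRingHom R),
    ← Polynomial.map_mul, coeff_map]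
  exact Nat.cast_nonneg _

theorem ascPochhammer_coeff_pos [Nontrivial R] {k m : ℕ} (hm : 1 ≤ m) (hmk : m ≤ k) :
    0 < (ascPochhammer R k).coeff m := by
  rw [← ascPochhammer_map (Nat.castRingHom R), coeff_map]
  exact Nat.cast_pos.mpr (ascPochhammer_nat_coeff_pos hm hmk)

end OrderedSemiring

section StrictLogConcave

variable {n : ℕ} {f : ℕ → ℝ}

theorem pos_of_strictLogConcave (hpos : ∀ k, k ≤ n → 0 ≤ f k)
    (hslc : ∀ k, 1 ≤ k → k ≤ n - 1 → f (k - 1) * f (k + 1) < f k ^ 2)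
    {k : ℕ} (hk : 1 ≤ k) (hkn : k + 1 ≤ n) : 0 < f k := by
  have := hslc k hk (by omega)
  have := mul_nonneg (hpos (k - 1) (by omega)) (hpos (k + 1) hkn)
  nlinarith [hpos k (by omega)]

theorem mul_lt_mul_of_strictLogConcave (hpos : ∀ k, k ≤ n → 0 ≤ f k)
    (hslc : ∀ k, 1 ≤ k → k ≤ n - 1 → f (k - 1) * f (k + 1) < f k ^ 2)
    {a c : ℕ} (hac : a + 1 ≤ c) (hcn : c + 1 ≤ n) : f a * f (c + 1) < f (a + 1) * f c := by
  induction c, hac using Nat.le_induction with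
  | base => simpa [sq] using hslc (a + 1) (by omega) (by omega)
  | succ c hac ih =>
    have hlc : f c * f (c + 2) < f (c + 1) ^ 2 := by simpa using hslc (c + 1) (by omega) (by omega)
    have hmid := pos_of_strictLogConcave hpos hslc (k := c + 1) (by omega) hcn
    have ha := pos_of_strictLogConcave hpos hslc (k := a + 1) (by omega) (by omega)
    refine lt_of_mul_lt_mul_right ?_ hmid.le
    calc f a * f (c + 2) * f (c + 1) = f a * f (c + 1) * f (c + 2) := by ring
      _ ≤ f (a + 1) * f c * f (c + 2) :=
          mul_le_mul_of_nonneg_right (ih (by omega)).le (hpos (c + 2) hcn)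
      _ = f (a + 1) * (f c * f (c + 2)) := by ring
      _ < f (a + 1) * f (c + 1) ^ 2 := mul_lt_mul_of_pos_left hlc ha
      _ = f (a + 1) * f (c + 1) * f (c + 1) := by ring

end StrictLogConcave

theorem X_mul_Ppoly (N : ℕ) (f : ℕ → ℝ) :
    X * Ppoly (N + 1) f = ∑ k ∈ Finset.range (N + 1),
      C ((N + 1) * N.choose k * (f k * f (N + 1 - k) - f (k + 1) * f (N - k))) *
        (ascPochhammer ℝ (k + 1) * ascPochhammer ℝ (N - k)) := by
  have hparts := Finset.sum_range_mul_sub_by_parts (fun k => C (f k * f (N + 1 - k)))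
    (fun k => ((k * (N + 1).choose k : ℕ) : ℝ[X]) *
      (ascPochhammer ℝ k * ascPochhammer ℝ (N + 1 - k))) (N + 1)
  simp only [Nat.choose_succ_self, mul_zero, zero_mul, Nat.cast_zero, sub_zero] at hparts
  calc X * Ppoly (N + 1) f
      = ∑ k ∈ Finset.range (N + 1 + 1), C (f k * f (N + 1 - k)) *
          (((k + 1) * (N + 1).choose (k + 1) : ℕ) * (ascPochhammer ℝ (k + 1) *
              ascPochhammer ℝ (N + 1 - (k + 1))) -
            ((k * (N + 1).choose k : ℕ) : ℝ[X]) *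
              (ascPochhammer ℝ k * ascPochhammer ℝ (N + 1 - k))) := by
        rw [Ppoly, Finset.mul_sum]
        refine Finset.sum_congr rfl fun k _ => ?_
        rw [← X_mul_choose_mul_ascPochhammer_sub_shift, C_mul, map_natCast]
        ring
    _ = _ := by
        rw [hparts, zero_add]
        refine Finset.sum_congr rfl fun k _ => ?_
        rw [mul_comm (k + 1), ← Nat.add_one_mul_choose_eq, Nat.add_sub_add_right]
        simp only [map_mul, map_sub, map_add, map_one, map_natCast]
        push_cast
        ring

noncomputable def ppolyWeight (N : ℕ) (f : ℕ → ℝ) (i : ℕ) : ℝ :=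
  (N + 1) * N.choose i * ((N : ℝ) - 2 * i) * (f (i + 1) * f (N - i) - f i * f (N + 1 - i))

theorem C_two_mul_X_mul_Ppoly (N : ℕ) (f : ℕ → ℝ) :
    C 2 * (X * Ppoly (N + 1) f) = ∑ i ∈ Finset.range (N + 1),
      C (ppolyWeight N f i) * (ascPochhammer ℝ i * ascPochhammer ℝ (N - i)) := by
  set t : ℕ → ℝ[X] := fun k =>
    C ((N + 1) * N.choose k * (f k * f (N + 1 - k) - f (k + 1) * f (N - k))) *
      (ascPochhammer ℝ (k + 1) * ascPochhammer ℝ (N - k))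
  have hreflect : ∑ k ∈ Finset.range (N + 1), t (N - k) = ∑ k ∈ Finset.range (N + 1), t k := by
    simpa using Finset.sum_range_reflect t (N + 1)
  rw [X_mul_Ppoly, map_ofNat, two_mul]
  nth_rw 2 [← hreflect]
  rw [← Finset.sum_add_distrib]
  refine Finset.sum_congr rfl fun i hi => ?_
  obtain ⟨j, rfl⟩ : ∃ j, N = i + j := ⟨N - i, by have := Finset.mem_range.mp hi; omega⟩
  simp only [t, ppolyWeight, Nat.add_sub_cancel_left, Nat.add_sub_cancel,
    show i + j + 1 - i = j + 1 by omega, show i + j + 1 - j = i + 1 by omega,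
    ← Nat.choose_symm_add, map_mul, map_sub, map_add, map_one, map_ofNat, map_natCast]
  push_cast
  linear_combination (-((i : ℝ[X]) + j + 1) * ((i + j).choose i : ℝ[X]) *
    (C (f i) * C (f (j + 1)) - C (f (i + 1)) * C (f j))) *
      ascPochhammer_succ_mul_sub_mul_succ (R := ℝ) i j

theorem ppolyWeight_nonneg {N : ℕ} {f : ℕ → ℝ} (hpos : ∀ k, k ≤ N + 1 → 0 ≤ f k)
    (hslc : ∀ k, 1 ≤ k → k ≤ N + 1 - 1 → f (k - 1) * f (k + 1) < f k ^ 2)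
    {i : ℕ} (hi : i ≤ N) : 0 ≤ ppolyWeight N f i := by
  have hsign : 0 ≤ ((N : ℝ) - 2 * i) * (f (i + 1) * f (N - i) - f i * f (N + 1 - i)) := by
    rcases lt_trichotomy (2 * i) N with h | h | h
    · have := mul_lt_mul_of_strictLogConcave hpos hslc (a := i) (c := N - i) (by omega) (by omega)
      rw [show N - i + 1 = N + 1 - i by omega] at this
      have : (2 * i : ℝ) < N := by exact_mod_cast h
      nlinarith
    · have : (N : ℝ) = 2 * i := by exact_mod_cast h.symm
      simp [this]
    · have := mul_lt_mul_of_strictLogConcave hpos hslc (a := N - i) (c := i) (by omega) (by omega)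
      rw [show N - i + 1 = N + 1 - i by omega] at this
      have : (N : ℝ) < 2 * i := by exact_mod_cast h
      nlinarith
  unfold ppolyWeight
  rw [mul_assoc]
  positivity

theorem ppolyWeight_zero_pos {N : ℕ} {f : ℕ → ℝ} (hpos : ∀ k, k ≤ N + 1 → 0 ≤ f k)
    (hslc : ∀ k, 1 ≤ k → k ≤ N + 1 - 1 → f (k - 1) * f (k + 1) < f k ^ 2)
    (hN : 1 ≤ N) : 0 < ppolyWeight N f 0 := by
  have := mul_lt_mul_of_strictLogConcave hpos hslc (a := 0) (c := N) hN le_rfl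
  unfold ppolyWeight
  simp only [Nat.choose_zero_right, Nat.cast_one, mul_one, Nat.cast_zero, mul_zero, sub_zero,
    zero_add, Nat.sub_zero]
  exact mul_pos (by positivity) (by linarith)

theorem natDegree_sum_C_mul_ascPochhammer_le (N : ℕ) (w : ℕ → ℝ) :
    (∑ i ∈ Finset.range (N + 1),
      C (w i) * (ascPochhammer ℝ i * ascPochhammer ℝ (N - i))).natDegree ≤ N := by
  refine natDegree_sum_le_of_forall_le _ _ fun i hi => ?_
  refine (natDegree_C_mul_le _ _).trans (natDegree_mul_le.trans ?_)
  rw [ascPochhammer_natDegree, ascPochhammer_natDegree]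
  simp only [Finset.mem_range] at hi
  omega

theorem coeff_sum_C_mul_ascPochhammer_pos {N : ℕ} {w : ℕ → ℝ} (hw : ∀ i, i ≤ N → 0 ≤ w i)
    (hw0 : 0 < w 0) {m : ℕ} (hm : 1 ≤ m) (hmN : m ≤ N) :
    0 < (∑ i ∈ Finset.range (N + 1),
      C (w i) * (ascPochhammer ℝ i * ascPochhammer ℝ (N - i))).coeff m := by
  rw [finsetSum_coeff]
  refine lt_of_lt_of_le ?_ (Finset.single_le_sum (fun i hi => ?_) (Finset.mem_range.mpr N.succ_pos))
  · rw [coeff_C_mul, ascPochhammer_zero, one_mul, Nat.sub_zero]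
    exact mul_pos hw0 (ascPochhammer_coeff_pos hm hmN)
  · rw [coeff_C_mul]
    exact mul_nonneg (hw i (Nat.lt_succ_iff.mp (Finset.mem_range.mp hi)))
      (ascPochhammer_mul_coeff_nonneg _ _ _)

theorem P_degree_and_positive_coefficients
    (n : ℕ) (hn : 2 ≤ n) (f : ℕ → ℝ)
    (hpos : ∀ k, k ≤ n → 0 ≤ f k)
    (hslc : ∀ k, 1 ≤ k → k ≤ n - 1 → f (k - 1) * f (k + 1) < f k ^ 2) :
    (Ppoly n f).degree = (n - 2 : ℕ) ∧ ∀ j, j ≤ n - 2 → 0 < (Ppoly n f).coeff j := by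
  obtain ⟨N, rfl⟩ : ∃ N, n = N + 1 := ⟨n - 1, by omega⟩
  have hcoeff (m : ℕ) : (Ppoly (N + 1) f).coeff m = (∑ i ∈ Finset.range (N + 1),
      C (ppolyWeight N f i) * (ascPochhammer ℝ i * ascPochhammer ℝ (N - i))).coeff (m + 1) / 2 := by
    rw [← C_two_mul_X_mul_Ppoly, coeff_C_mul, coeff_X_mul]
    ring
  have hcoeff_pos (j : ℕ) (hj : j ≤ N + 1 - 2) : 0 < (Ppoly (N + 1) f).coeff j := by
    rw [hcoeff]
    exact half_pos (coeff_sum_C_mul_ascPochhammer_pos (fun i hi => ppolyWeight_nonneg hpos hslc hi)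
      (ppolyWeight_zero_pos hpos hslc (by omega)) (by omega) (by omega))
  refine ⟨degree_eq_of_le_of_coeff_ne_zero ?_ (hcoeff_pos _ le_rfl).ne', hcoeff_pos⟩
  rw [degree_le_iff_coeff_zero]
  intro m hm
  have hdeg := natDegree_sum_C_mul_ascPochhammer_le N (ppolyWeight N f)
  have hm' : N + 1 - 2 < m := by exact_mod_cast hm
  rw [hcoeff, coeff_eq_zero_of_natDegree_lt (by omega), zero_div]
end

section
/- For every integer n ≥ 2 and all real x, one has the polynomial identity 2(x)_n − (x+1)_n − (x−1)_n = −n(n−1)(x+1)_{n−2}; that is, Φ_0(x) = −n(n−1)(x+1)_{n−2}. -/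
/-- Rising factorial (Pochhammer symbol): `asc x k = x (x+1) ⋯ (x+k-1)`. -/
noncomputable def asc (x : ℝ) (k : ℕ) : ℝ := (ascPochhammer ℝ k).eval x

/- Writing `P = (x+1)_{n-2}`, each of the three products of length `n` is `P` times two linear
factors, and the quadratic parts of those factors cancel in `2(x)_n - (x+1)_n - (x-1)_n`. -/

lemma asc_succ_left (x : ℝ) (k : ℕ) : asc x (k + 1) = x * asc (x + 1) k := by
  simp [asc, ascPochhammer_succ_left, Polynomial.eval_comp]

lemma asc_succ_right (x : ℝ) (k : ℕ) : asc x (k + 1) = asc x k * (x + k) := by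
  simp [asc, ascPochhammer_succ_right]

lemma asc_add_two_left (x : ℝ) (k : ℕ) : asc x (k + 2) = x * (x + 1) * asc (x + 2) k := by
  rw [asc_succ_left, asc_succ_left]
  ring_nf

lemma asc_add_two_right (x : ℝ) (k : ℕ) : asc x (k + 2) = asc x k * (x + k) * (x + k + 1) := by
  rw [asc_succ_right, asc_succ_right]
  push_cast
  ring

lemma asc_add_two_eq_mul_asc_mul (x : ℝ) (k : ℕ) :
    asc x (k + 2) = x * asc (x + 1) k * (x + 1 + k) := by
  rw [asc_succ_left, asc_succ_right]
  ring

theorem Phi_zero_identity (n : ℕ) (hn : 2 ≤ n) (x : ℝ) :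
    2 * asc x n - asc (x + 1) n - asc (x - 1) n =
      -(n * (n - 1) : ℝ) * asc (x + 1) (n - 2) := by
  obtain ⟨m, rfl⟩ := Nat.exists_eq_add_of_le' hn
  rw [Nat.add_sub_cancel, asc_add_two_eq_mul_asc_mul x, asc_add_two_right (x + 1),
    asc_add_two_left (x - 1), show x - 1 + 2 = x + 1 by ring]
  push_cast
  ring
end

section
/- Let n = 2m be an even integer with m ≥ 2. Then for all real x one has the polynomial identity (x)_m² − (x−1)_m (x+1)_m = (x)_{m−1} (x+1)_{m−2} ( m x + m(m−1) ); that is, Φ_{n/2}(x) = (x)_{n/2−1}(x+1)_{n/2−2}( (n/2) x + n(n−2)/4 ). -/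
lemma sq_asc_sub_asc_sub_one_mul_asc_add_one (x : ℝ) (k : ℕ) :
    asc x (k + 1) ^ 2 - asc (x - 1) (k + 1) * asc (x + 1) (k + 1) =
      (k + 1) * asc x k * asc (x + 1) k := by
  rw [sq]
  nth_rw 1 [asc_succ_right]
  rw [asc_succ_left x, asc_succ_left (x - 1), sub_add_cancel, asc_succ_right (x + 1)]
  ring

theorem Phi_half_identity (m : ℕ) (hm : 2 ≤ m) (x : ℝ) :
    asc x m ^ 2 - asc (x - 1) m * asc (x + 1) m =
      asc x (m - 1) * asc (x + 1) (m - 2) * ((m : ℝ) * x + (m : ℝ) * ((m : ℝ) - 1)) := by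
  obtain ⟨k, rfl⟩ : ∃ k, m = k + 2 := ⟨m - 2, by omega⟩
  rw [show k + 2 - 1 = k + 1 from rfl, show k + 2 - 2 = k from rfl,
    sq_asc_sub_asc_sub_one_mul_asc_add_one, asc_succ_right (x + 1)]
  push_cast
  ring
end
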